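/- arXiv:2206.13512 — 2 statements merged into one kernel-verified Lean document; each statement's English description precedes it below -/
import Mathlib

section
/- If A and B are G-equidecomposable sets and B is G-paradoxical, then A is G-paradoxical. -/
/-!
Equidecomposability by finite partitions is the same as the existence of a partial bijection
`f : A → B` that moves every point by one of finitely many group elements (Mathlib's
`Equidecomp`). In that form symmetry, transitivity and restriction to subsets come for free, and a
paradoxical decomposition `B = B₁ ∪ B₂` is carried to `A = f B₁ ∪ f B₂` along a bijection
`f : B → A`, with `f Bᵢ ∼ Bᵢ ∼ B ∼ A`.
-/

open scoped Pointwise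

/-- `A` and `B` are `G`-equidecomposable: there are finite partitions
`A = A₁ ∪ … ∪ Aₙ` and `B = B₁ ∪ … ∪ Bₙ` into pairwise disjoint pieces and
`g₁, …, gₙ ∈ G` with `Bᵢ = gᵢ • Aᵢ`. -/
def EquidecompFin (G : Type*) {X : Type*} [Group G] [MulAction G X] (A B : Set X) : Prop :=
  ∃ (n : ℕ) (P : Fin n → Set X) (g : Fin n → G),
    Pairwise (Function.onFun Disjoint P) ∧ (⋃ i, P i) = A ∧
    Pairwise (Function.onFun Disjoint fun i => g i • P i) ∧ (⋃ i, g i • P i) = B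

/-- `E` is `G`-paradoxical: `E` is nonempty and splits into two disjoint pieces,
each `G`-equidecomposable with `E`. -/
def Paradoxical (G : Type*) {X : Type*} [Group G] [MulAction G X] (E : Set X) : Prop :=
  E.Nonempty ∧ ∃ A B : Set X, A ∪ B = E ∧ Disjoint A B ∧
    EquidecompFin G A E ∧ EquidecompFin G B E

open Set Function

lemma Set.InjOn.disjoint_image {α β : Type*} {f : α → β} {s t u : Set α} (hf : InjOn f u)
    (hs : s ⊆ u) (ht : t ⊆ u) (hst : Disjoint s t) : Disjoint (f '' s) (f '' t) := by
  rw [disjoint_iff_inter_eq_empty, ← hf.image_inter hs ht, hst.inter_eq, image_empty]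

namespace EquidecompFin

variable {G X : Type*} [Group G] [MulAction G X]

lemma of_finite {ι : Type*} [Finite ι] {A B : Set X} (P : ι → Set X) (g : ι → G)
    (hP : Pairwise (Disjoint on P)) (hPA : ⋃ i, P i = A)
    (hgP : Pairwise (Disjoint on fun i => g i • P i)) (hgPB : ⋃ i, g i • P i = B) :
    EquidecompFin G A B := by
  obtain ⟨n, ⟨e⟩⟩ := Finite.exists_equiv_fin ι
  refine ⟨n, P ∘ e.symm, g ∘ e.symm, hP.comp_of_injective e.symm.injective, ?_,
    hgP.comp_of_injective e.symm.injective, ?_⟩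
  · rw [← hPA]; exact e.symm.surjective.iUnion_comp P
  · rw [← hgPB]; exact e.symm.surjective.iUnion_comp fun i => g i • P i

end EquidecompFin

section PiecewiseSMul

variable {G X ι : Type*} [SMul G X]

open Classical in
noncomputable def piecewiseSMul (P : ι → Set X) (g : ι → G) (x : X) : X :=
  if h : ∃ i, x ∈ P i then g h.choose • x else x

lemma piecewiseSMul_of_mem {P : ι → Set X} (hP : Pairwise (Disjoint on P)) (g : ι → G)
    {i : ι} {x : X} (hx : x ∈ P i) : piecewiseSMul P g x = g i • x := by
  have h : ∃ i, x ∈ P i := ⟨i, hx⟩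
  rw [piecewiseSMul, dif_pos h,
    subsingleton_setOfPred_mem_iff_pairwise_disjoint.2 hP x h.choose_spec hx]

end PiecewiseSMul

noncomputable def Equidecomp.ofPartition {G X ι : Type*} [Group G] [MulAction G X] [Finite ι]
    {P : ι → Set X} {g : ι → G}
    (hP : Pairwise (Disjoint on P)) (hgP : Pairwise (Disjoint on fun i => g i • P i)) :
    Equidecomp X G where
  toFun := piecewiseSMul P g
  invFun := piecewiseSMul (fun i => g i • P i) fun i => (g i)⁻¹
  source := ⋃ i, P i
  target := ⋃ i, g i • P i
  map_source' x hx := by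
    obtain ⟨i, hx⟩ := mem_iUnion.1 hx
    rw [piecewiseSMul_of_mem hP g hx]
    exact mem_iUnion_of_mem i (smul_mem_smul_set hx)
  map_target' y hy := by
    obtain ⟨i, hy⟩ := mem_iUnion.1 hy
    rw [piecewiseSMul_of_mem hgP _ hy]
    exact mem_iUnion_of_mem i (mem_smul_set_iff_inv_smul_mem.1 hy)
  left_inv' x hx := by
    obtain ⟨i, hx⟩ := mem_iUnion.1 hx
    rw [piecewiseSMul_of_mem hP g hx, piecewiseSMul_of_mem hgP _ (smul_mem_smul_set hx),
      inv_smul_smul]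
  right_inv' y hy := by
    obtain ⟨i, hy⟩ := mem_iUnion.1 hy
    rw [piecewiseSMul_of_mem hgP _ hy,
      piecewiseSMul_of_mem hP g (mem_smul_set_iff_inv_smul_mem.1 hy), smul_inv_smul]
  isDecompOn' := by
    classical
    refine ⟨(finite_range g).toFinset, fun x hx => ?_⟩
    obtain ⟨i, hx⟩ := mem_iUnion.1 hx
    exact ⟨g i, by simp, piecewiseSMul_of_mem hP g hx⟩

lemma Equidecomp.equidecompFin {G X : Type*} [Group G] [MulAction G X] (f : Equidecomp X G) :
    EquidecompFin G f.source f.target := by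
  choose γ hγS hγ using f.isDecompOn
  let P : f.witness → Set X := fun s => {a | ∃ ha : a ∈ f.source, γ a ha = s}
  have hPf : ∀ s, P s ⊆ f.source := fun _ _ ⟨ha, _⟩ => ha
  have hfP : ∀ s, s.1 • P s = f '' P s := fun s => by
    rw [← image_smul]
    refine image_congr fun a ⟨ha, hγa⟩ => ?_
    rw [hγ a ha, hγa]
  have hP : Pairwise (Disjoint on P) := fun s t hst =>
    disjoint_left.2 fun a ⟨_, hs⟩ ⟨_, ht⟩ => hst (Subtype.ext (hs.symm.trans ht))
  have hPA : ⋃ s, P s = f.source := Subset.antisymm (iUnion_subset hPf)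
    fun a ha => mem_iUnion.2 ⟨⟨γ a ha, hγS a ha⟩, ha, rfl⟩
  refine EquidecompFin.of_finite P (fun s => s.1) hP hPA (fun s t hst => ?_) ?_
  · simp only [onFun, hfP]
    exact f.injOn.disjoint_image (hPf s) (hPf t) (hP hst)
  · simp only [hfP, ← image_iUnion, hPA]
    exact f.image_source_eq_target

namespace EquidecompFin

variable {G X : Type*} [Group G] [MulAction G X] {A B C : Set X}

theorem iff_exists_equidecomp :
    EquidecompFin G A B ↔ ∃ f : Equidecomp X G, f.source = A ∧ f.target = B := by
  constructor
  · rintro ⟨n, P, g, hP, rfl, hgP, rfl⟩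
    exact ⟨Equidecomp.ofPartition hP hgP, rfl, rfl⟩
  · rintro ⟨f, rfl, rfl⟩
    exact f.equidecompFin

lemma symm (h : EquidecompFin G A B) : EquidecompFin G B A := by
  obtain ⟨f, rfl, rfl⟩ := iff_exists_equidecomp.1 h
  simpa using f.symm.equidecompFin

lemma trans (hAB : EquidecompFin G A B) (hBC : EquidecompFin G B C) : EquidecompFin G A C := by
  obtain ⟨f, rfl, rfl⟩ := iff_exists_equidecomp.1 hAB
  obtain ⟨f', hf', rfl⟩ := iff_exists_equidecomp.1 hBC
  have h := (f.trans f').equidecompFin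
  rwa [Equidecomp.trans_toPartialEquiv, PartialEquiv.trans_source, PartialEquiv.trans_target, hf',
    inter_eq_left.2 f.source_subset_preimage_target, ← hf',
    inter_eq_left.2 f'.target_subset_preimage_source] at h

end EquidecompFin

lemma Equidecomp.equidecompFin_image {G X : Type*} [Group G] [MulAction G X] (f : Equidecomp X G)
    {S : Set X} (hS : S ⊆ f.source) : EquidecompFin G S (f '' S) := by
  have h := (f.restr S).equidecompFin
  rwa [f.source_restr hS, ← (f.restr S).image_source_eq_target, f.source_restr hS] at h

/-- Paradoxicality is inherited between equidecomposable sets: if `A ∼ B` and `B` is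
`G`-paradoxical, then `A` is `G`-paradoxical. -/
theorem paradoxical_of_equidecomp {G X : Type*} [Group G] [MulAction G X] {A B : Set X}
    (h : EquidecompFin G A B) (hB : Paradoxical G B) : Paradoxical G A := by
  obtain ⟨hne, B₁, B₂, hB₁₂, hdisj, h₁, h₂⟩ := hB
  obtain ⟨f, rfl, rfl⟩ := EquidecompFin.iff_exists_equidecomp.1 h.symm
  have hB₁ : B₁ ⊆ f.source := hB₁₂ ▸ subset_union_left
  have hB₂ : B₂ ⊆ f.source := hB₁₂ ▸ subset_union_right
  refine ⟨f.image_source_eq_target ▸ hne.image f, f '' B₁, f '' B₂, ?_,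
    f.injOn.disjoint_image hB₁ hB₂ hdisj, ?_, ?_⟩
  · rw [← image_union, hB₁₂, f.image_source_eq_target]
  · exact (f.equidecompFin_image hB₁).symm.trans (h₁.trans f.equidecompFin)
  · exact (f.equidecompFin_image hB₂).symm.trans (h₂.trans f.equidecompFin)
end

section
/- The angle arccos(4/5) is an irrational multiple of π. -/
open Real

/-- The integer sequence `a n = 5 ^ n * cos (n * arccos (4/5))`. -/
private def aSeq : ℕ → ℤ
  | 0 => 1
  | 1 => 4
  | (n + 2) => 8 * aSeq (n + 1) - 25 * aSeq n

private lemma aSeq_real (θ : ℝ) (hθ : Real.cos θ = 4 / 5) (n : ℕ) :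
    (aSeq n : ℝ) = 5 ^ n * Real.cos (n * θ) := by
  induction n using Nat.strong_induction_on with
  | _ n ih =>
    match n with
    | 0 => simp [aSeq]
    | 1 => simp [aSeq, hθ]; ring
    | (n + 2) =>
      have h1 := ih (n + 1) (by omega)
      have h0 := ih n (by omega)
      have key : Real.cos ((n + 2 : ℕ) * θ) + Real.cos (n * θ)
          = 2 * Real.cos ((n + 1 : ℕ) * θ) * Real.cos θ := by
        have e1 : ((n + 2 : ℕ) : ℝ) * θ = ((n + 1 : ℕ) : ℝ) * θ + θ := by
          push_cast; ring
        have e2 : ((n : ℕ) : ℝ) * θ = ((n + 1 : ℕ) : ℝ) * θ - θ := by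
          push_cast; ring
        rw [e1, e2, Real.cos_add, Real.cos_sub]; ring
      have : Real.cos ((n + 2 : ℕ) * θ)
          = 2 * Real.cos ((n + 1 : ℕ) * θ) * Real.cos θ - Real.cos (n * θ) := by
        linarith
      rw [show aSeq (n + 2) = 8 * aSeq (n + 1) - 25 * aSeq n from rfl]
      push_cast at this h1 h0 ⊢
      rw [h1, h0, this, hθ]
      ring

private lemma aSeq_not_dvd (n : ℕ) : ¬ (5 : ℤ) ∣ aSeq (n + 1) := by
  induction n with
  | zero => decide
  | succ n ih =>
    intro h
    rw [show aSeq (n + 2) = 8 * aSeq (n + 1) - 25 * aSeq n from rfl] at h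
    have : (5 : ℤ) ∣ 8 * aSeq (n + 1) := by
      have : (5 : ℤ) ∣ 25 * aSeq n := ⟨5 * aSeq n, by ring⟩
      omega
    have h5 : (5 : ℤ) ∣ aSeq (n + 1) := by
      have := (Int.Prime.dvd_mul' (by norm_num) this)
      rcases this with h | h
      · omega
      · exact h
    exact ih h5

/-- The angle `arccos (4/5)` is an irrational multiple of `π`. -/
theorem arccos_four_fifths_irrational : Irrational (Real.arccos (4 / 5) / Real.pi) := by
  set θ := Real.arccos (4 / 5) with hθdef
  have hcos : Real.cos θ = 4 / 5 := Real.cos_arccos (by norm_num) (by norm_num)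
  rintro ⟨r, hr⟩
  have hπ : Real.pi ≠ 0 := Real.pi_ne_zero
  have hθ : θ = (r : ℝ) * Real.pi := by
    field_simp at hr
    linarith [hr]
  -- q θ = p π
  have hq : (r.den : ℝ) * θ = (r.num : ℝ) * Real.pi := by
    rw [hθ]
    have hd : (r.den : ℝ) ≠ 0 := by exact_mod_cast r.den_nz
    have : ((r.den : ℝ)) * (r : ℝ) = (r.num : ℝ) := by
      rw [Rat.cast_def]
      field_simp
    rw [← mul_assoc, this]
  have habs : |(aSeq r.den : ℝ)| = 5 ^ r.den := by
    rw [aSeq_real θ hcos r.den, hq, abs_mul, Real.abs_cos_int_mul_pi]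
    simp [abs_of_pos, pow_pos]
  have h5 : (5 : ℤ) ∣ aSeq r.den := by
    have : (aSeq r.den : ℝ) = 5 ^ r.den ∨ (aSeq r.den : ℝ) = -(5 ^ r.den) :=
      abs_eq (by positivity) |>.mp habs
    have hd : r.den ≠ 0 := r.den_nz
    rcases this with h | h
    · have : aSeq r.den = 5 ^ r.den := by exact_mod_cast h
      rw [this]
      exact dvd_pow_self 5 hd
    · have : aSeq r.den = -(5 ^ r.den) := by exact_mod_cast h
      rw [this]
      exact (dvd_pow_self 5 hd).neg_right
  obtain ⟨m, hm⟩ := Nat.exists_eq_succ_of_ne_zero r.den_nz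
  rw [hm] at h5
  exact aSeq_not_dvd m h5
end
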